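/- Let I be an ideal on ℕ. If I_{1/n} ∩ I⁺ = ∅ (i.e., every set of I_{1/n} is in I), then for every X ∉ I the ideal I_X is disjoint from I*; and if I_X ∩ I* = ∅ for every X ∉ I, then I_{1/n} ∩ I* = ∅. Moreover, neither implication reverses. -/

import Mathlib

open Filter Set

/-- `I` is an ideal on `ℕ`: it contains all finite sets, is closed under subsets and
finite unions, and `ℕ ∉ I`. -/
def IsIdealOnNat (I : Set (Set ℕ)) : Prop :=
  (∀ A : Set ℕ, A.Finite → A ∈ I) ∧
  (∀ A B : Set ℕ, A ⊆ B → B ∈ I → A ∈ I) ∧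
  (∀ A B : Set ℕ, A ∈ I → B ∈ I → A ∪ B ∈ I) ∧
  (Set.univ : Set ℕ) ∉ I

/-- For an infinite `X = {x₁ < x₂ < …} ⊆ ℕ`, `fX X i = 1 / xₙ` where `xₙ` is the least
element of `X` with `i ≤ xₙ` (equivalently, `i ∈ (x_{n-1}, xₙ]`, with `x₀ = 0`). -/
noncomputable def fX (X : Set ℕ) (i : ℕ) : ℝ :=
  1 / (sInf {x | x ∈ X ∧ i ≤ x} : ℕ)

/-- Condition (1): `I_{1/n} ∩ I⁺ = ∅`, i.e. every set with summable reciprocals lies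
in `I`. -/
def Cond1 (I : Set (Set ℕ)) : Prop :=
  ∀ A : Set ℕ, Summable (A.indicator fun n : ℕ => 1 / (n : ℝ)) → A ∈ I

/-- Condition (2): `I_X ∩ I^* = ∅` for every `X ∉ I`. -/
def Cond2 (I : Set (Set ℕ)) : Prop :=
  ∀ X : Set ℕ, X ∉ I → ∀ A : Set ℕ, Summable (A.indicator (fX X)) → Aᶜ ∉ I

/-- Condition (3): `I_{1/n} ∩ I^* = ∅`. -/
def Cond3 (I : Set (Set ℕ)) : Prop :=
  ∀ A : Set ℕ, Summable (A.indicator fun n : ℕ => 1 / (n : ℝ)) → Aᶜ ∉ I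

lemma fX_nonneg (X : Set ℕ) (i : ℕ) : 0 ≤ fX X i := by unfold fX; positivity

lemma fX_eq_of_mem {X : Set ℕ} {i : ℕ} (h : i ∈ X) : fX X i = 1 / (i : ℝ) := by
  have hne : {x | x ∈ X ∧ i ≤ x}.Nonempty := ⟨i, h, le_refl i⟩
  have h1 : sInf {x | x ∈ X ∧ i ≤ x} = i :=
    le_antisymm (Nat.sInf_le ⟨h, le_refl i⟩) (Nat.sInf_mem hne).2
  rw [fX, h1]

lemma fX_ge {X : Set ℕ} {i y : ℕ} (hy : y ∈ X) (hiy : i ≤ y) (hi : 1 ≤ i) :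
    1 / (y : ℝ) ≤ fX X i := by
  have hne : {x | x ∈ X ∧ i ≤ x}.Nonempty := ⟨y, hy, hiy⟩
  have h1 : sInf {x | x ∈ X ∧ i ≤ x} ≤ y := Nat.sInf_le ⟨hy, hiy⟩
  have h2 : 1 ≤ sInf {x | x ∈ X ∧ i ≤ x} := le_trans hi (Nat.sInf_mem hne).2
  rw [fX]
  apply one_div_le_one_div_of_le
  · exact_mod_cast h2
  · exact_mod_cast h1

lemma not_summable_of_blocks (f : ℕ → ℝ)
    (h : ∀ s : Finset ℕ, ∃ t : Finset ℕ, Disjoint t s ∧ 1/2 ≤ ∑ i ∈ t, f i) :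
    ¬ Summable f := by
  intro hs
  rw [summable_iff_vanishing] at hs
  obtain ⟨s, hst⟩ := hs (Set.Iio (1/2)) (Iio_mem_nhds (by norm_num))
  obtain ⟨t, htd, hts⟩ := h s
  have := hst t htd
  simp only [Set.mem_Iio] at this
  linarith

lemma sum_Ioc_ge (f : ℕ → ℝ) (a b : ℕ) (hab : 2*a ≤ b) (hb : 0 < b)
    (hf : ∀ i ∈ Finset.Ioc a b, 1/(b:ℝ) ≤ f i) :
    1/2 ≤ ∑ i ∈ Finset.Ioc a b, f i := by
  have hcard := Finset.card_nsmul_le_sum (Finset.Ioc a b) f (1/(b:ℝ)) hf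
  rw [Nat.card_Ioc, nsmul_eq_mul] at hcard
  have hba : a ≤ b := le_trans (by omega) hab
  have hc : ((b - a : ℕ) : ℝ) = (b:ℝ) - a := by
    push_cast [Nat.cast_sub hba]; ring
  rw [hc] at hcard
  have hbR : (0:ℝ) < b := by exact_mod_cast hb
  have habR : 2*(a:ℝ) ≤ b := by exact_mod_cast hab
  have : (1:ℝ)/2 ≤ ((b:ℝ) - a) * (1/b) := by
    rw [div_le_iff₀ (by norm_num), mul_comm ((b:ℝ)-a)]
    rw [one_div, mul_assoc]
    nlinarith [mul_le_mul_of_nonneg_left habR (le_of_lt (inv_pos.mpr hbR)), mul_inv_cancel₀ (ne_of_gt hbR)]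
  linarith

lemma disjoint_Ioc_sup (s : Finset ℕ) (a b : ℕ) (h : s.sup id ≤ a) :
    Disjoint (Finset.Ioc a b) s := by
  rw [Finset.disjoint_left]
  intro i hi his
  have : i ≤ s.sup id := Finset.le_sup (f := id) his
  simp only [Finset.mem_Ioc] at hi
  omega


lemma imp12 : ∀ I : Set (Set ℕ), IsIdealOnNat I → Cond1 I → Cond2 I := by
  intro I ⟨hfin, hsub, hun, huniv⟩ h1 X hX A hA hAc
  set Y := X ∩ A with hY
  have hle : ∀ i, Y.indicator (fun n : ℕ => 1 / (n:ℝ)) i ≤ A.indicator (fX X) i := by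
    intro i
    by_cases hi : i ∈ Y
    · rw [Set.indicator_of_mem hi, Set.indicator_of_mem hi.2, fX_eq_of_mem hi.1]
    · rw [Set.indicator_of_notMem hi]
      exact Set.indicator_nonneg (fun j _ => fX_nonneg X j) i
  have hnn : ∀ i, 0 ≤ Y.indicator (fun n : ℕ => 1 / (n:ℝ)) i :=
    fun i => Set.indicator_nonneg (fun j _ => by positivity) i
  have hYs : Summable (Y.indicator fun n : ℕ => 1 / (n : ℝ)) :=
    Summable.of_nonneg_of_le hnn hle hA
  have hYI : Y ∈ I := h1 Y hYs
  exact hX (hsub X (Y ∪ Aᶜ) (fun x hx => by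
    by_cases hxA : x ∈ A
    · exact Or.inl ⟨hx, hxA⟩
    · exact Or.inr hxA) (hun Y Aᶜ hYI hAc))

lemma imp23 : ∀ I : Set (Set ℕ), IsIdealOnNat I → Cond2 I → Cond3 I := by
  intro I hI h2 A hA
  have huniv : fX Set.univ = fun n : ℕ => 1 / (n : ℝ) := by
    funext i
    exact fX_eq_of_mem (Set.mem_univ i)
  apply h2 Set.univ hI.2.2.2 A
  rw [huniv]; exact hA

lemma finite_bound {F : Set ℕ} (hF : F.Finite) : ∃ N, ∀ x ∈ F, x ≤ N := by
  obtain ⟨N, hN⟩ := hF.bddAbove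
  exact ⟨N, fun x hx => hN hx⟩

lemma ex1 : ∃ I : Set (Set ℕ), IsIdealOnNat I ∧ Cond2 I ∧ ¬ Cond1 I := by
  refine ⟨{C | C.Finite}, ⟨fun A h => h, fun A B hs hB => hB.subset hs,
    fun A B hA hB => hA.union hB, fun h => Set.infinite_univ h⟩, ?_, ?_⟩
  · -- Cond2
    intro X hX A hA hAc
    have hXi : X.Infinite := hX
    simp only [Set.mem_setOf_eq] at hAc
    obtain ⟨N, hN⟩ := finite_bound hAc
    refine not_summable_of_blocks _ (fun s => ?_) hA
    obtain ⟨a, haX, ha⟩ := hXi.exists_gt (max N (s.sup id))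
    obtain ⟨b, hbX, hb⟩ := hXi.exists_gt (2*a)
    refine ⟨Finset.Ioc a b, disjoint_Ioc_sup s a b (le_trans (le_max_right _ _) ha.le), ?_⟩
    apply sum_Ioc_ge _ a b hb.le (by omega)
    intro i hi
    simp only [Finset.mem_Ioc] at hi
    have hiA : i ∈ A := by
      by_contra hiA
      exact absurd (hN i hiA) (by omega)
    rw [Set.indicator_of_mem hiA]
    exact fX_ge hbX hi.2 (by omega)
  · -- ¬ Cond1
    intro h1
    set S : Set ℕ := Set.range (fun n : ℕ => (n+1)^2) with hS
    have hinj' : Function.Injective (fun n : ℕ => (n+1)^2) := fun a b h => by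
      have : a + 1 = b + 1 :=
        Nat.pow_left_injective (n := 2) (by norm_num) (by exact h)
      omega
    have hsum : Summable (S.indicator fun n : ℕ => 1 / (n : ℝ)) := by
      rw [← hinj'.summable_iff (by
        intro x hx
        exact Set.indicator_of_notMem (by simpa [hS] using hx) _)]
      have : (S.indicator (fun n : ℕ => 1 / (n : ℝ))) ∘ (fun n : ℕ => (n+1)^2)
          = fun n : ℕ => 1 / ((n:ℝ)+1)^2 := by
        funext n
        simp only [Function.comp_apply]
        rw [Set.indicator_of_mem (Set.mem_range_self n)]
        push_cast; ring_nf
      rw [this]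
      have h2 : Summable (fun n : ℕ => 1 / ((n:ℝ))^2) :=
        Real.summable_one_div_nat_pow.mpr (by norm_num)
      exact (summable_nat_add_iff 1).mpr h2 |>.congr (fun n => by push_cast; ring_nf)
    have : S.Finite := h1 S hsum
    exact (Set.infinite_range_of_injective hinj') this

def xseq (n : ℕ) : ℕ := 2^(2^n)
def Ablocks : Set ℕ := ⋃ n, Set.Ioc (xseq n) (2 * xseq n)
def Xg (n : ℕ) : ℕ := xseq n + 1

lemma xseq_pos (n : ℕ) : 0 < xseq n := Nat.pow_pos (by norm_num)
lemma xseq_two_le (n : ℕ) : 2 ≤ xseq n := by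
  calc 2 = 2^1 := rfl
  _ ≤ 2^(2^n) := Nat.pow_le_pow_right (by norm_num) (Nat.one_le_two_pow)
lemma xseq_strictMono : StrictMono xseq := fun a b h =>
  Nat.pow_lt_pow_right (by norm_num) (Nat.pow_lt_pow_right (by norm_num) h)
lemma xseq_ge (n : ℕ) : n < xseq n :=
  lt_of_lt_of_le ((Nat.lt_two_pow_self (n := n))) (Nat.pow_le_pow_right (by norm_num) (Nat.le_of_lt ((Nat.lt_two_pow_self (n := n)))))
lemma xseq_succ (n : ℕ) : xseq (n+1) = xseq n ^ 2 := by
  rw [xseq, xseq, pow_succ, pow_mul]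

lemma mem_Ablocks {i : ℕ} : i ∈ Ablocks ↔ ∃ n, xseq n < i ∧ i ≤ 2 * xseq n := by
  simp [Ablocks, Set.mem_iUnion, Set.mem_Ioc]

lemma Xg_mem_Ablocks (n : ℕ) : Xg n ∈ Ablocks :=
  mem_Ablocks.mpr ⟨n, by have := xseq_two_le n; unfold Xg; omega, by have := xseq_two_le n; unfold Xg; omega⟩

lemma Xg_strictMono : StrictMono Xg := fun a b h => by
  have := xseq_strictMono h; unfold Xg; omega

lemma ex2 : ∃ I : Set (Set ℕ), IsIdealOnNat I ∧ Cond3 I ∧ ¬ Cond2 I := by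
  refine ⟨{C | (C ∩ Ablocks).Finite}, ⟨?_, ?_, ?_, ?_⟩, ?_, ?_⟩
  · exact fun A h => h.subset Set.inter_subset_left
  · exact fun A B hs hB => hB.subset (Set.inter_subset_inter_left _ hs)
  · intro A B hA hB
    simp only [Set.mem_setOf_eq, Set.union_inter_distrib_right]
    exact hA.union hB
  · simp only [Set.mem_setOf_eq, Set.univ_inter]
    intro h
    exact ((Set.infinite_range_of_injective Xg_strictMono.injective).mono
      (Set.range_subset_iff.mpr Xg_mem_Ablocks)) h
  · -- Cond3
    intro A hA hAc
    simp only [Set.mem_setOf_eq] at hAc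
    obtain ⟨N2, hN2⟩ := finite_bound hAc
    refine not_summable_of_blocks _ (fun s => ?_) hA
    set n := s.sup id + N2 + 1 with hn
    have hxn : s.sup id + N2 + 1 < xseq n := by rw [hn]; exact xseq_ge n
    refine ⟨Finset.Ioc (xseq n) (2 * xseq n),
      disjoint_Ioc_sup s _ _ (by omega), ?_⟩
    apply sum_Ioc_ge _ _ _ (le_refl _) (by have := xseq_pos n; omega)
    intro i hi
    simp only [Finset.mem_Ioc] at hi
    have hiAb : i ∈ Ablocks := mem_Ablocks.mpr ⟨n, hi.1, hi.2⟩
    have hiA : i ∈ A := by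
      by_contra hiA
      have := hN2 i ⟨hiA, hiAb⟩
      omega
    rw [Set.indicator_of_mem hiA]
    have h1 : (1:ℕ) ≤ i := by have := xseq_pos n; omega
    have : (i:ℝ) ≤ (2 * xseq n : ℕ) := by exact_mod_cast hi.2
    apply one_div_le_one_div_of_le (by exact_mod_cast h1)
    exact this
  · -- ¬ Cond2
    intro h2
    set X : Set ℕ := Set.range Xg with hXdef
    have hXnotI : X ∉ {C | (C ∩ Ablocks).Finite} := by
      simp only [Set.mem_setOf_eq]
      intro h
      exact ((Set.infinite_range_of_injective Xg_strictMono.injective).mono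
        (fun x hx => Set.mem_inter hx
          (by obtain ⟨n, rfl⟩ := hx; exact Xg_mem_Ablocks n))) h
    have hAbc : Ablocksᶜ ∈ {C | (C ∩ Ablocks).Finite} := by
      simp only [Set.mem_setOf_eq, Set.compl_inter_self]
      exact Set.finite_empty
    -- summability
    have key : ∀ i, Ablocks.indicator (fX X) i ≤
        X.indicator (fun j : ℕ => 1/(j:ℝ)) i + 4/(i:ℝ)^2 := by
      intro i
      have hrhs2 : (0:ℝ) ≤ 4/(i:ℝ)^2 := by positivity
      by_cases hiA : i ∈ Ablocks
      · rw [Set.indicator_of_mem hiA]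
        by_cases hiX : i ∈ X
        · rw [Set.indicator_of_mem hiX]
          have : fX X i = 1/(i:ℝ) := by
            have hne : {x | x ∈ X ∧ i ≤ x}.Nonempty := ⟨i, hiX, le_refl i⟩
            have h1 : sInf {x | x ∈ X ∧ i ≤ x} = i :=
              le_antisymm (Nat.sInf_le ⟨hiX, le_refl i⟩) (Nat.sInf_mem hne).2
            rw [fX, h1]
          rw [this]; linarith
        · rw [Set.indicator_of_notMem hiX, zero_add]
          obtain ⟨n, hn1, hn2⟩ := mem_Ablocks.mp hiA
          -- sInf ≥ xseq (n+1)
          have hne : {x | x ∈ X ∧ i ≤ x}.Nonempty := by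
            refine ⟨Xg i, ?_⟩
            simp only [Set.mem_setOf_eq]
            exact ⟨Set.mem_range_self i, by unfold Xg; have := xseq_ge i; omega⟩
          have hmem : sInf {x | x ∈ X ∧ i ≤ x} ∈ {x | x ∈ X ∧ i ≤ x} := Nat.sInf_mem hne
          simp only [Set.mem_setOf_eq] at hmem
          obtain ⟨hmX, hile⟩ := hmem
          obtain ⟨k, hk⟩ := hmX
          set m := sInf {x | x ∈ X ∧ i ≤ x} with hm
          have hik : i ≤ xseq k := by
            have hne' : i ≠ Xg k := fun h => hiX (h ▸ Set.mem_range_self k)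
            have hile' : i ≤ Xg k := by rw [hk]; exact hile
            unfold Xg at hne' hile'
            omega
          have hnk : n < k := xseq_strictMono.lt_iff_lt.mp (lt_of_lt_of_le hn1 hik)
          have hmge : xseq n ^ 2 ≤ m := by
            rw [← hk]
            have : xseq (n+1) ≤ xseq k := xseq_strictMono.monotone hnk
            rw [xseq_succ] at this
            unfold Xg
            omega
          have hm0 : (0:ℝ) < (xseq n : ℝ)^2 := by
            have := xseq_pos n; positivity
          have hfle : fX X i ≤ 1/((xseq n : ℝ)^2) := by
            rw [fX, ← hm]
            apply one_div_le_one_div_of_le hm0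
            exact_mod_cast hmge
          have hi2 : (i:ℝ) ≤ 2 * (xseq n : ℝ) := by exact_mod_cast hn2
          have hipos : (0:ℝ) < i := by
            have := xseq_pos n
            have : 0 < i := by omega
            exact_mod_cast this
          have : 1/((xseq n : ℝ)^2) ≤ 4/(i:ℝ)^2 := by
            rw [div_le_div_iff₀ hm0 (by positivity)]
            nlinarith
          linarith
      · rw [Set.indicator_of_notMem hiA]
        have : (0:ℝ) ≤ X.indicator (fun j : ℕ => 1/(j:ℝ)) i :=
          Set.indicator_nonneg (fun j _ => by positivity) i
        linarith
    have hsum1 : Summable (X.indicator (fun j : ℕ => 1/(j:ℝ))) := by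
      rw [← Xg_strictMono.injective.summable_iff (by
        intro x hx
        exact Set.indicator_of_notMem (by simpa [hXdef] using hx) _)]
      refine Summable.of_nonneg_of_le ?_ ?_
        (summable_geometric_of_lt_one (by norm_num) (by norm_num) :
          Summable fun n : ℕ => (1/2:ℝ)^n)
      · intro n
        simp only [Function.comp_apply]
        exact Set.indicator_nonneg (fun j _ => by positivity) _
      · intro n
        simp only [Function.comp_apply]
        rw [Set.indicator_of_mem (Set.mem_range_self n)]
        have h2n : (2:ℕ)^n ≤ Xg n := by
          unfold Xg xseq
          have := Nat.pow_le_pow_right (by norm_num : 1 ≤ 2) (Nat.le_of_lt ((Nat.lt_two_pow_self (n := n))))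
          omega
        have hhalf : (1/2:ℝ)^n = 1/((2:ℝ)^n) := by rw [div_pow, one_pow]
        rw [hhalf]
        apply one_div_le_one_div_of_le (by positivity)
        calc ((2:ℝ))^n = ((2^n : ℕ) : ℝ) := by push_cast; ring
        _ ≤ (Xg n : ℝ) := by exact_mod_cast h2n
    have hsum2 : Summable (fun i : ℕ => 4/(i:ℝ)^2) := by
      have h2 : Summable (fun n : ℕ => 1 / (n:ℝ)^2) :=
        Real.summable_one_div_nat_pow.mpr (by norm_num)
      exact (h2.mul_left 4).congr (fun n => by ring)
    have hsum : Summable (Ablocks.indicator (fX X)) :=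
      Summable.of_nonneg_of_le
        (fun i => Set.indicator_nonneg (fun j _ => fX_nonneg X j) i)
        key (hsum1.add hsum2)
    exact h2 X hXnotI Ablocks hsum hAbc


/-- For any ideal `I`, (1) implies (2) and (2) implies (3); moreover neither
implication reverses. -/
theorem cond_implications :
    (∀ I : Set (Set ℕ), IsIdealOnNat I → Cond1 I → Cond2 I) ∧
    (∀ I : Set (Set ℕ), IsIdealOnNat I → Cond2 I → Cond3 I) ∧
    (∃ I : Set (Set ℕ), IsIdealOnNat I ∧ Cond2 I ∧ ¬ Cond1 I) ∧
    (∃ I : Set (Set ℕ), IsIdealOnNat I ∧ Cond3 I ∧ ¬ Cond2 I) :=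
  ⟨imp12, imp23, ex1, ex2⟩
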